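/- arXiv:2307.02241 — 6 statements merged into one kernel-verified Lean document; each statement's English description precedes it below -/
import Mathlib

section
/- Let G=(V,E,cap) be a capacitated graph and A,B,C ⊆ V with A ∪ C = V, A ∩ C = B, and no edges between A∖B and C∖B. Then the minimum capacitated dominating set size of G is at least the minimum capacitated dominating set size of G[A] plus the minimum capacitated dominating set size of G[C] minus 2|B|. -/
/-- `(X, f)` is a capacitated dominating set of the induced subgraph `G[A]` (with capacities
`cap` inherited from `G`): `X ⊆ A`, every `v ∈ A \ X` is assigned by `f` to an adjacent
vertex of `X`, and each `x ∈ X` is assigned at most `cap x` vertices. -/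
def CapDomOn {V : Type*} (G : SimpleGraph V) (cap : V → ℕ) (A X : Set V) (f : V → V) : Prop :=
  X ⊆ A ∧ (∀ v ∈ A \ X, f v ∈ X ∧ G.Adj (f v) v) ∧
    ∀ x ∈ X, ((A \ X) ∩ f ⁻¹' {x}).ncard ≤ cap x

/-- The minimum size of a capacitated dominating set of `G[A]`. -/
noncomputable def optCapDom {V : Type*} (G : SimpleGraph V) (cap : V → ℕ) (A : Set V) : ℕ :=
  sInf {n | ∃ (X : Set V) (f : V → V), CapDomOn G cap A X f ∧ X.ncard = n}

lemma capDomOn_side {V : Type*} [Fintype V] (G : SimpleGraph V) (cap : V → ℕ)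
    (A B C X : Set V) (f : V → V)
    (hAC : A ∪ C = Set.univ) (hB : A ∩ C = B)
    (hsep : ∀ a ∈ A \ B, ∀ c ∈ C \ B, ¬ G.Adj a c)
    (h : CapDomOn G cap Set.univ X f) :
    CapDomOn G cap A ((X ∩ A) ∪ (B \ X)) f := by
  obtain ⟨-, hdom, hcap⟩ := h
  have hBA : B ⊆ A := hB ▸ Set.inter_subset_left
  refine ⟨?_, ?_, ?_⟩
  · exact Set.union_subset Set.inter_subset_right (fun x hx => hBA hx.1)
  · rintro v ⟨hvA, hvX⟩
    have hvnX : v ∉ X := fun h => hvX (Or.inl ⟨h, hvA⟩)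
    have hvnB : v ∉ B := fun h => hvX (Or.inr ⟨h, hvnX⟩)
    obtain ⟨hfX, hadj⟩ := hdom v ⟨Set.mem_univ v, hvnX⟩
    have hfA : f v ∈ A := by
      by_contra hfA
      have hfC : f v ∈ C := by
        have := Set.mem_univ (f v)
        rw [← hAC] at this
        rcases (Set.mem_union _ _ _).mp this with h | h
        · exact absurd h hfA
        · exact h
      have hfB : f v ∉ B := fun h => hfA (hBA h)
      exact hsep v ⟨hvA, hvnB⟩ (f v) ⟨hfC, hfB⟩ hadj.symm
    exact ⟨Or.inl ⟨hfX, hfA⟩, hadj⟩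
  · intro x hx
    by_cases hxX : x ∈ X
    · refine le_trans (Set.ncard_le_ncard ?_ (Set.toFinite _)) (hcap x hxX)
      rintro v ⟨⟨hvA, hvX⟩, hvf⟩
      exact ⟨⟨Set.mem_univ v, fun h => hvX (Or.inl ⟨h, hvA⟩)⟩, hvf⟩
    · have hempty : (A \ ((X ∩ A) ∪ (B \ X))) ∩ f ⁻¹' {x} = ∅ := by
        ext v
        simp only [Set.mem_inter_iff, Set.mem_diff, Set.mem_preimage, Set.mem_singleton_iff,
          Set.mem_empty_iff_false, iff_false, not_and]
        rintro ⟨hvA, hvX⟩ hvf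
        have hvnX : v ∉ X := fun h => hvX (Or.inl ⟨h, hvA⟩)
        obtain ⟨hfX, -⟩ := hdom v ⟨Set.mem_univ v, hvnX⟩
        exact hxX (hvf ▸ hfX)
      simp [hempty]

/-- If `A ∪ C = V`, `A ∩ C = B`, and there are no edges between `A \ B` and `C \ B`, then
`OPT_CAP(G) ≥ OPT_CAP(G[A]) + OPT_CAP(G[C]) - 2|B|`. -/
theorem optCapDom_split_lower_bound {V : Type*} [Fintype V]
    (G : SimpleGraph V) (cap : V → ℕ)
    (A B C : Set V) (hAC : A ∪ C = Set.univ) (hB : A ∩ C = B)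
    (hsep : ∀ a ∈ A \ B, ∀ c ∈ C \ B, ¬ G.Adj a c) :
    optCapDom G cap A + optCapDom G cap C ≤ optCapDom G cap Set.univ + 2 * B.ncard := by
  classical
  have hne : {n | ∃ (X : Set V) (f : V → V), CapDomOn G cap Set.univ X f ∧ X.ncard = n}.Nonempty := by
    refine ⟨Set.univ.ncard, Set.univ, id, ⟨subset_rfl, ?_, ?_⟩, rfl⟩ <;> simp
  obtain ⟨X, f, hXdom, hXcard⟩ := Nat.sInf_mem hne
  have hCA : C ∪ A = Set.univ := by rw [Set.union_comm]; exact hAC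
  have hCB : C ∩ A = B := by rw [Set.inter_comm]; exact hB
  have hsep' : ∀ a ∈ C \ B, ∀ c ∈ A \ B, ¬ G.Adj a c :=
    fun a ha c hc h => hsep c hc a ha h.symm
  have h1 : optCapDom G cap A ≤ (X ∩ A).ncard + (B \ X).ncard :=
    le_trans (Nat.sInf_le ⟨_, f, capDomOn_side G cap A B C X f hAC hB hsep hXdom, rfl⟩)
      (Set.ncard_union_le _ _)
  have h2 : optCapDom G cap C ≤ (X ∩ C).ncard + (B \ X).ncard :=
    le_trans (Nat.sInf_le ⟨_, f, capDomOn_side G cap C B A X f hCA hCB hsep' hXdom, rfl⟩)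
      (Set.ncard_union_le _ _)
  have e1 : (X ∩ A) ∪ (X ∩ C) = X := by
    rw [← Set.inter_union_distrib_left, hAC, Set.inter_univ]
  have e2 : (X ∩ A) ∩ (X ∩ C) = X ∩ B := by
    rw [← hB]; ext v; simp only [Set.mem_inter_iff]; tauto
  have h3 : (X ∩ A).ncard + (X ∩ C).ncard = X.ncard + (X ∩ B).ncard := by
    have := Set.ncard_union_add_ncard_inter (X ∩ A) (X ∩ C)
    rw [e1, e2] at this
    omega
  have h4 : (X ∩ B).ncard + (B \ X).ncard = B.ncard := by
    rw [Set.inter_comm]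
    exact Set.ncard_inter_add_ncard_diff_eq_ncard B X
  have h5 : (B \ X).ncard ≤ B.ncard := Set.ncard_le_ncard Set.diff_subset (Set.toFinite _)
  have hXcard' : X.ncard = optCapDom G cap Set.univ := hXcard
  rw [hXcard'] at h3
  omega
end

section
/- Let G=(V,E,cap) be a capacitated graph with maximum degree Δ and A,B,C ⊆ V with A ∪ C = V, A ∩ C = B, and no edges between A∖B and C∖B. Given capacitated dominating sets (X,f) of G[A] and (Y,g) of G[C], the set Z = X ∪ Y ∪ N[B], with the assignment mapping each v ∈ A∖Z to f(v) and each v ∈ C∖Z to g(v), is a capacitated dominating set of G of size at most |X| + |Y| + (Δ+1)·|B|. -/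
/-- The closed neighborhood `N[B]` of a vertex set `B` in `G`. -/
def closedNbhd {V : Type*} (G : SimpleGraph V) (B : Set V) : Set V :=
  {v | v ∈ B ∨ ∃ b ∈ B, G.Adj b v}

/-!
Every vertex `v ∉ Z` is assigned, on its own side, to a neighbour in `X` or `Y ⊆ Z`. Such a
dominator `x = h v` is not in `B`, since otherwise `v ∈ N[B] ⊆ Z`; so it lies in `A ∖ B`, say.
As `A ∖ B` has no neighbours in `C ∖ B`, every vertex that `h` assigns to `x` lies in `A`, where
`h` agrees with `f`, and the capacity of `x` is respected because `f` respects it.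
-/

section

variable {V : Type*} {G : SimpleGraph V}

lemma closedNbhd_eq_biUnion (B : Set V) :
    closedNbhd G B = ⋃ b ∈ B, insert b (G.neighborSet b) := by
  ext v
  simp only [closedNbhd, Set.mem_ofPred_eq, Set.mem_iUnion, Set.mem_insert_iff,
    SimpleGraph.mem_neighborSet, exists_prop]
  constructor
  · rintro (hv | ⟨b, hb, hbv⟩)
    exacts [⟨v, hv, Or.inl rfl⟩, ⟨b, hb, Or.inr hbv⟩]
  · rintro ⟨b, hb, rfl | hbv⟩
    exacts [Or.inl hb, Or.inr ⟨b, hb, hbv⟩]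

lemma ncard_closedNbhd_le [Finite V] {Δ : ℕ} (hΔ : ∀ v, (G.neighborSet v).ncard ≤ Δ)
    (B : Set V) : (closedNbhd G B).ncard ≤ (Δ + 1) * B.ncard := by
  calc (closedNbhd G B).ncard
      ≤ ∑ b ∈ B.toFinite.toFinset, (insert b (G.neighborSet b)).ncard := by
        rw [closedNbhd_eq_biUnion]
        simpa using B.toFinite.toFinset.set_ncard_biUnion_le _
    _ ≤ ∑ _b ∈ B.toFinite.toFinset, (Δ + 1) :=
        Finset.sum_le_sum fun b _ => (Set.ncard_insert_le _ _).trans (Nat.add_le_add_right (hΔ b) 1)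
    _ = (Δ + 1) * B.ncard := by
        rw [Finset.sum_const, smul_eq_mul, mul_comm, Set.ncard_eq_toFinset_card _ B.toFinite]

variable {cap : V → ℕ} {A C X Z : Set V} {f h : V → V}

lemma CapDomOn.apply_mem_adj (hX : CapDomOn G cap A X f) (hXZ : X ⊆ Z)
    (hh : ∀ v ∈ A \ Z, h v = f v) {v : V} (hv : v ∈ A \ Z) : h v ∈ X ∧ G.Adj (h v) v := by
  rw [hh v hv]
  exact hX.2.1 v ⟨hv.1, fun hvX => hv.2 (hXZ hvX)⟩

lemma fiber_subset_of_separated (hsep : ∀ a ∉ C, ∀ c ∉ A, ¬ G.Adj a c)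
    (hBZ : closedNbhd G (A ∩ C) ⊆ Z) (hadj : ∀ v ∉ Z, G.Adj (h v) v) {v₀ : V} (hv₀ : v₀ ∉ Z)
    (hA : h v₀ ∈ A) : Zᶜ ∩ h ⁻¹' {h v₀} ⊆ A := by
  have hC : h v₀ ∉ C := fun hC => hv₀ (hBZ (Or.inr ⟨h v₀, ⟨hA, hC⟩, hadj v₀ hv₀⟩))
  rintro v ⟨hvZ, hv : h v = h v₀⟩
  by_contra hvA
  exact hsep _ hC v hvA (hv ▸ hadj v hvZ)

lemma CapDomOn.ncard_fiber_le [Finite V] (hX : CapDomOn G cap A X f) (hXZ : X ⊆ Z)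
    (hh : ∀ v ∈ A \ Z, h v = f v) (hsep : ∀ a ∉ C, ∀ c ∉ A, ¬ G.Adj a c)
    (hBZ : closedNbhd G (A ∩ C) ⊆ Z) (hadj : ∀ v ∉ Z, G.Adj (h v) v) {v₀ : V}
    (hv₀ : v₀ ∈ A \ Z) : (Zᶜ ∩ h ⁻¹' {h v₀}).ncard ≤ cap (h v₀) := by
  have hx := (hX.apply_mem_adj hXZ hh hv₀).1
  have hfib := fiber_subset_of_separated hsep hBZ hadj hv₀.2 (hX.1 hx)
  refine (Set.ncard_le_ncard ?_ (Set.toFinite _)).trans (hX.2.2 _ hx)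
  rintro v ⟨hvZ, hvx⟩
  have hvA : v ∈ A := hfib ⟨hvZ, hvx⟩
  refine ⟨⟨hvA, fun hvX => hvZ (hXZ hvX)⟩, ?_⟩
  rwa [Set.mem_preimage, ← hh v ⟨hvA, hvZ⟩]

end

/-- Combining capacitated dominating sets `(X, f)` of `G[A]` and `(Y, g)` of `G[C]`:
`Z = X ∪ Y ∪ N[B]`, with the assignment sending `v ∈ A \ Z` to `f v` and `v ∈ C \ Z`
to `g v`, is a capacitated dominating set of `G` of size at most
`|X| + |Y| + (Δ + 1) * |B|`. -/
theorem capDom_combine {V : Type*} [Fintype V]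
    (G : SimpleGraph V) (cap : V → ℕ) (Δ : ℕ)
    (hΔ : ∀ v : V, (G.neighborSet v).ncard ≤ Δ)
    (A B C : Set V) (hAC : A ∪ C = Set.univ) (hB : A ∩ C = B)
    (hsep : ∀ a ∈ A \ B, ∀ c ∈ C \ B, ¬ G.Adj a c)
    (X Y : Set V) (f g : V → V)
    (hX : CapDomOn G cap A X f) (hY : CapDomOn G cap C Y g)
    (Z : Set V) (hZ : Z = X ∪ Y ∪ closedNbhd G B)
    (h : V → V)
    (hhA : ∀ v ∈ A \ Z, h v = f v) (hhC : ∀ v ∈ C \ Z, h v = g v) :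
    CapDomOn G cap Set.univ Z h ∧ Z.ncard ≤ X.ncard + Y.ncard + (Δ + 1) * B.ncard := by
  subst hB
  have hcover (v : V) : v ∈ A ∨ v ∈ C := by simp [← Set.mem_union, hAC]
  have hsepAC : ∀ a ∉ C, ∀ c ∉ A, ¬ G.Adj a c := fun a ha c hc =>
    hsep a ⟨(hcover a).resolve_right ha, ha ∘ And.right⟩
      c ⟨(hcover c).resolve_left hc, hc ∘ And.left⟩
  have hsepCA : ∀ c ∉ A, ∀ a ∉ C, ¬ G.Adj c a := fun c hc a ha hca => hsepAC a ha c hc hca.symm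
  have hXZ : X ⊆ Z := hZ ▸ Set.subset_union_left.trans Set.subset_union_left
  have hYZ : Y ⊆ Z := hZ ▸ Set.subset_union_right.trans Set.subset_union_left
  have hBZ : closedNbhd G (A ∩ C) ⊆ Z := hZ ▸ Set.subset_union_right
  have hdom (v : V) (hv : v ∉ Z) : h v ∈ Z ∧ G.Adj (h v) v := by
    rcases hcover v with hvA | hvC
    · exact (hX.apply_mem_adj hXZ hhA ⟨hvA, hv⟩).imp_left (@hXZ _)
    · exact (hY.apply_mem_adj hYZ hhC ⟨hvC, hv⟩).imp_left (@hYZ _)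
  have hadj v hv := (hdom v hv).2
  refine ⟨⟨Set.subset_univ Z, fun v hv => hdom v hv.2, fun x _ => ?_⟩, ?_⟩
  · rw [← Set.compl_eq_univ_sdiff]
    rcases (Zᶜ ∩ h ⁻¹' {x}).eq_empty_or_nonempty with hempty | ⟨v₀, hv₀Z, rfl : h v₀ = x⟩
    · simp [hempty]
    rcases hcover v₀ with hv₀A | hv₀C
    · exact hX.ncard_fiber_le hXZ hhA hsepAC hBZ hadj ⟨hv₀A, hv₀Z⟩
    · exact hY.ncard_fiber_le hYZ hhC hsepCA (Set.inter_comm A C ▸ hBZ) hadj ⟨hv₀C, hv₀Z⟩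
  · calc Z.ncard
        ≤ (X ∪ Y).ncard + (closedNbhd G (A ∩ C)).ncard := hZ ▸ Set.ncard_union_le _ _
      _ ≤ X.ncard + Y.ncard + (Δ + 1) * (A ∩ C).ncard :=
        add_le_add (Set.ncard_union_le _ _) (ncard_closedNbhd_le hΔ _)
end

section
/- Let G=(V,E) be a graph and A,B,C ⊆ V with A ∪ C = V, A ∩ C = B, and no edges between A∖B and C∖B. Then the minimum independent dominating set size of G is at least the minimum independent dominating set size of G[A] plus the minimum independent dominating set size of G[C] minus 2|B|. -/
/-- `X` is an independent set in `G`. -/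
def IsIndepSet' {V : Type*} (G : SimpleGraph V) (X : Set V) : Prop :=
  ∀ x ∈ X, ∀ y ∈ X, ¬ G.Adj x y

/-- `X` is an independent dominating set of the induced subgraph `G[A]`. -/
def IndDomOn {V : Type*} (G : SimpleGraph V) (A X : Set V) : Prop :=
  X ⊆ A ∧ IsIndepSet' G X ∧ ∀ v ∈ A, ∃ x ∈ X, x = v ∨ G.Adj x v

/-- The minimum size of an independent dominating set of `G[A]`. -/
noncomputable def optIndDom {V : Type*} (G : SimpleGraph V) (A : Set V) : ℕ :=
  sInf {n | ∃ X : Set V, IndDomOn G A X ∧ X.ncard = n}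

/-!
Take a minimum independent dominating set `X` of `G`. Its trace `X ∩ A` is independent in `G[A]`,
and since a vertex of `A \ B` has all its neighbours in `A`, every vertex of `A` that `X ∩ A` fails
to dominate lies in `B \ X`. Completing `X ∩ A` by an independent dominating set of those vertices
gives `OPT_IND(G[A]) ≤ |X ∩ A| + |B \ X|`, and likewise for `C`. Adding up,
`|X ∩ A| + |X ∩ C| = |X| + |X ∩ B|` and `|X ∩ B| + |B \ X| = |B|`.
-/

section

variable {V : Type*} {G : SimpleGraph V}

theorem IsIndepSet'.mono {X Y : Set V} (hY : IsIndepSet' G Y) (hXY : X ⊆ Y) : IsIndepSet' G X :=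
  fun x hx y hy => hY x (hXY hx) y (hXY hy)

theorem IsIndepSet'.insert {X : Set V} {v : V} (hX : IsIndepSet' G X)
    (hv : ∀ x ∈ X, ¬ G.Adj x v) : IsIndepSet' G (insert v X) := by
  rintro x (rfl | hx) y (rfl | hy)
  · exact G.irrefl
  · exact fun h => hv y hy h.symm
  · exact hv x hx
  · exact hX x hx y hy

theorem IsIndepSet'.union {X Y : Set V} (hX : IsIndepSet' G X) (hY : IsIndepSet' G Y)
    (hXY : ∀ x ∈ X, ∀ y ∈ Y, ¬ G.Adj x y) : IsIndepSet' G (X ∪ Y) := by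
  rintro x (hx | hx) y (hy | hy)
  · exact hX x hx y hy
  · exact hXY x hx y hy
  · exact fun h => hXY y hy x hx h.symm
  · exact hY x hx y hy

/-- A maximal independent subset of `A` dominates `A`. -/
theorem exists_indDomOn [Finite V] (G : SimpleGraph V) (A : Set V) : ∃ X, IndDomOn G A X := by
  let indepIn : Set (Set V) := {X | X ⊆ A ∧ IsIndepSet' G X}
  obtain ⟨X, -, hX⟩ := (Set.toFinite indepIn).exists_le_maximal
    (show ∅ ∈ indepIn from ⟨Set.empty_subset A, fun x hx => hx.elim⟩)
  refine ⟨X, hX.prop.1, hX.prop.2, fun v hv => ?_⟩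
  by_contra! hund
  have hvX : v ∈ X := hX.mem_of_prop_insert
    ⟨Set.insert_subset hv hX.prop.1, hX.prop.2.insert fun x hx => (hund x hx).2⟩
  exact (hund v hvX).1 rfl

theorem optIndDom_le_ncard {A X : Set V} (hX : IndDomOn G A X) : optIndDom G A ≤ X.ncard :=
  Nat.sInf_le ⟨X, hX, rfl⟩

theorem exists_indDomOn_ncard_eq_optIndDom [Finite V] (G : SimpleGraph V) (A : Set V) :
    ∃ X, IndDomOn G A X ∧ X.ncard = optIndDom G A := by
  obtain ⟨X, hX⟩ := exists_indDomOn G A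
  exact Nat.sInf_mem (s := {n | ∃ X : Set V, IndDomOn G A X ∧ X.ncard = n})
    ⟨X.ncard, X, hX, rfl⟩

/-- Complete `X` by an independent dominating set of the vertices of `A` it leaves undominated. -/
theorem optIndDom_le_ncard_add_ncard [Finite V] {A X S : Set V} (hXA : X ⊆ A)
    (hX : IsIndepSet' G X) (hS : ∀ v ∈ A, (∀ x ∈ X, x ≠ v ∧ ¬ G.Adj x v) → v ∈ S) :
    optIndDom G A ≤ X.ncard + S.ncard := by
  set U := {v | v ∈ A ∧ ∀ x ∈ X, x ≠ v ∧ ¬ G.Adj x v}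
  obtain ⟨Z, hZU, hZ, hZdom⟩ := exists_indDomOn G U
  have hXZ : IndDomOn G A (X ∪ Z) := by
    refine ⟨Set.union_subset hXA fun z hz => (hZU hz).1,
      hX.union hZ fun x hx z hz => ((hZU hz).2 x hx).2, fun v hv => ?_⟩
    by_cases hdom : ∃ x ∈ X, x = v ∨ G.Adj x v
    · obtain ⟨x, hx, hxv⟩ := hdom
      exact ⟨x, Or.inl hx, hxv⟩
    · push Not at hdom
      obtain ⟨z, hz, hzv⟩ := hZdom v ⟨hv, hdom⟩
      exact ⟨z, Or.inr hz, hzv⟩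
  calc optIndDom G A ≤ (X ∪ Z).ncard := optIndDom_le_ncard hXZ
    _ ≤ X.ncard + Z.ncard := Set.ncard_union_le X Z
    _ ≤ X.ncard + S.ncard := by
      gcongr
      · exact Set.toFinite S
      · exact fun z hz => hS z (hZU hz).1 (hZU hz).2

theorem mem_of_adj_of_mem_diff {A B C : Set V} (hAC : A ∪ C = Set.univ) (hB : A ∩ C = B)
    (hsep : ∀ a ∈ A \ B, ∀ c ∈ C \ B, ¬ G.Adj a c) {v x : V} (hv : v ∈ A \ B)
    (hxv : G.Adj x v) : x ∈ A := by
  by_contra hxA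
  have hxC : x ∈ C := ((Set.eq_univ_iff_forall.1 hAC) x).resolve_left hxA
  exact hsep v hv x ⟨hxC, fun hxB => hxA (hB ▸ hxB).1⟩ hxv.symm

theorem mem_diff_of_not_dominated {A B C X : Set V} (hAC : A ∪ C = Set.univ) (hB : A ∩ C = B)
    (hsep : ∀ a ∈ A \ B, ∀ c ∈ C \ B, ¬ G.Adj a c) (hX : ∀ v, ∃ x ∈ X, x = v ∨ G.Adj x v)
    {v : V} (hvA : v ∈ A) (hv : ∀ x ∈ X ∩ A, x ≠ v ∧ ¬ G.Adj x v) : v ∈ B \ X := by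
  have hvX : v ∉ X := fun hvX => (hv v ⟨hvX, hvA⟩).1 rfl
  refine ⟨?_, hvX⟩
  by_contra hvB
  obtain ⟨x, hx, rfl | hxv⟩ := hX v
  · exact hvX hx
  · exact (hv x ⟨hx, mem_of_adj_of_mem_diff hAC hB hsep ⟨hvA, hvB⟩ hxv⟩).2 hxv

theorem ncard_inter_add_ncard_inter [Finite V] {A B C : Set V} (hAC : A ∪ C = Set.univ)
    (hB : A ∩ C = B) (X : Set V) : (X ∩ A).ncard + (X ∩ C).ncard = X.ncard + (X ∩ B).ncard := by
  have hunion : (X ∩ A) ∪ (X ∩ C) = X := by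
    rw [← Set.inter_union_distrib_left, hAC, Set.inter_univ]
  have hinter : (X ∩ A) ∩ (X ∩ C) = X ∩ B := by rw [← hB, ← Set.inter_inter_distrib_left]
  rw [← Set.ncard_union_add_ncard_inter, hunion, hinter]

end

/-- If `A ∪ C = V`, `A ∩ C = B`, and there are no edges between `A \ B` and `C \ B`, then
`OPT_IND(G) ≥ OPT_IND(G[A]) + OPT_IND(G[C]) - 2|B|`. -/
theorem optIndDom_split_lower_bound {V : Type*} [Fintype V] (G : SimpleGraph V)
    (A B C : Set V) (hAC : A ∪ C = Set.univ) (hB : A ∩ C = B)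
    (hsep : ∀ a ∈ A \ B, ∀ c ∈ C \ B, ¬ G.Adj a c) :
    optIndDom G A + optIndDom G C ≤ optIndDom G Set.univ + 2 * B.ncard := by
  obtain ⟨X, ⟨-, hX, hXdom⟩, hXopt⟩ := exists_indDomOn_ncard_eq_optIndDom G Set.univ
  have hXdom_univ : ∀ v, ∃ x ∈ X, x = v ∨ G.Adj x v := fun v => hXdom v trivial
  have hA : optIndDom G A ≤ (X ∩ A).ncard + (B \ X).ncard :=
    optIndDom_le_ncard_add_ncard Set.inter_subset_right (hX.mono Set.inter_subset_left)
      fun _ hv hund => mem_diff_of_not_dominated hAC hB hsep hXdom_univ hv hund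
  have hCA : C ∪ A = Set.univ := by rwa [Set.union_comm]
  have hB' : C ∩ A = B := by rwa [Set.inter_comm]
  have hsep' : ∀ c ∈ C \ B, ∀ a ∈ A \ B, ¬ G.Adj c a := fun c hc a ha h => hsep a ha c hc h.symm
  have hC : optIndDom G C ≤ (X ∩ C).ncard + (B \ X).ncard :=
    optIndDom_le_ncard_add_ncard Set.inter_subset_right (hX.mono Set.inter_subset_left)
      fun _ hv hund => mem_diff_of_not_dominated hCA hB' hsep' hXdom_univ hv hund
  have hsplit := ncard_inter_add_ncard_inter hAC hB X
  have hBsplit : (X ∩ B).ncard + (B \ X).ncard = B.ncard := by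
    rw [Set.inter_comm, Set.ncard_inter_add_ncard_sdiff_eq_ncard]
  omega
end

section
/- Let G be a connected graph and A,B,C ⊆ V(G) with A ∪ C = V(G), A ∩ C = B, no edges between A∖B and C∖B, and A∖B, C∖B both nonempty. Then OPT_CON(G) ≥ OPT_CON(R(G[A],B)) + OPT_CON(R(G[C],B)) − 2, where OPT_CON denotes the minimum size of a connected dominating set. -/
/-- `X ⊆ A` dominates the vertex set `A` in the graph `H`. -/
def DomOn {V : Type*} (H : SimpleGraph V) (A X : Set V) : Prop :=
  X ⊆ A ∧ ∀ v ∈ A, ∃ x ∈ X, x = v ∨ H.Adj x v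

/-- `X` is a connected dominating set of the subgraph of `H` with vertex set `A`. -/
def ConnDomOn {V : Type*} (H : SimpleGraph V) (A X : Set V) : Prop :=
  DomOn H A X ∧ (H.induce X).Connected

/-- The minimum size of a connected dominating set of the subgraph of `H` on vertex set `A`. -/
noncomputable def optConnDom {V : Type*} (H : SimpleGraph V) (A : Set V) : ℕ :=
  sInf {n | ∃ X : Set V, ConnDomOn H A X ∧ X.ncard = n}

/-- The graph `R(G[A], B)`: delete `B` from `G[A]`, add a new vertex `z` (modelled by
`none : Option V`), and join `z` to every vertex of `A \ B` having a neighbor in `B`. -/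
def RGraph {V : Type*} (G : SimpleGraph V) (A B : Set V) : SimpleGraph (Option V) :=
  SimpleGraph.fromRel fun x y =>
    match x, y with
    | some a, some c => a ∈ A \ B ∧ c ∈ A \ B ∧ G.Adj a c
    | none, some a => a ∈ A \ B ∧ ∃ b ∈ B, G.Adj b a
    | _, _ => False

/-- The vertex set of `R(G[A], B)`. -/
def RVerts {V : Type*} (A B : Set V) : Set (Option V) :=
  insert none (some '' (A \ B))

open Classical in
lemma reach_map_aux {V W : Type*} {G : SimpleGraph V} {R : SimpleGraph W}
    {D : Set V} {X : Set W} (f : V → W) (hf : ∀ d ∈ D, f d ∈ X)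
    (hadj : ∀ u ∈ D, ∀ v ∈ D, G.Adj u v → f u = f v ∨ R.Adj (f u) (f v))
    (u v : D) (h : (G.induce D).Reachable u v) :
    (R.induce X).Reachable ⟨f u, hf u u.2⟩ ⟨f v, hf v v.2⟩ := by
  obtain ⟨w⟩ := h
  induction w with
  | nil => exact SimpleGraph.Reachable.refl _
  | @cons a b c hab p ih =>
    rcases hadj a a.2 b b.2 hab with h1 | h1
    · have : (⟨f a, hf a a.2⟩ : X) = ⟨f b, hf b b.2⟩ := Subtype.ext h1
      rw [this]; exact ih
    · have h2 : (R.induce X).Adj ⟨f a, hf a a.2⟩ ⟨f b, hf b b.2⟩ := h1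
      exact h2.reachable.trans ih

/-- Key lemma: from a connected dominating set `D` of `G`, build one for `R(G[A],B)`. -/
lemma side_bound {V : Type*} [Fintype V]
    (G : SimpleGraph V) (A B C : Set V) (hAC : A ∪ C = Set.univ) (hB : A ∩ C = B)
    (hsep : ∀ a ∈ A \ B, ∀ c ∈ C \ B, ¬ G.Adj a c)
    (hC : (C \ B).Nonempty)
    (D : Set V) (hD : ConnDomOn G Set.univ D) :
    optConnDom (RGraph G A B) (RVerts A B) ≤ (D ∩ (A \ B)).ncard + 1 := by
  classical
  obtain ⟨hdom, hconn⟩ := hD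
  set X : Set (Option V) := insert none (some '' (D ∩ (A \ B))) with hX
  set f : V → Option V := fun d => if d ∈ A \ B then some d else none with hf
  have hfX : ∀ d ∈ D, f d ∈ X := by
    intro d hd
    by_cases h : d ∈ A \ B
    · simp only [hf, if_pos h]
      exact Set.mem_insert_of_mem _ ⟨d, ⟨hd, h⟩, rfl⟩
    · simp only [hf, if_neg h]; exact Set.mem_insert _ _
  -- a vertex of D not in A \ B exists
  obtain ⟨c, hc⟩ := hC
  obtain ⟨d0, hd0D, hd0⟩ := hdom.2 c (Set.mem_univ c)
  have hd0n : d0 ∉ A \ B := by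
    intro hmem
    rcases hd0 with rfl | hadj
    · exact hmem.2 (hB ▸ ⟨hmem.1, hc.1⟩)
    · exact hsep d0 hmem c hc hadj
  -- adjacency transport
  have hadj : ∀ u ∈ D, ∀ v ∈ D, G.Adj u v →
      f u = f v ∨ (RGraph G A B).Adj (f u) (f v) := by
    intro u hu v hv huv
    by_cases hua : u ∈ A \ B <;> by_cases hva : v ∈ A \ B
    · right
      simp only [hf, if_pos hua, if_pos hva]
      refine ⟨by simpa using huv.ne, Or.inl ⟨hua, hva, huv⟩⟩
    · right
      have hvB : v ∈ B := by
        by_cases hvA : v ∈ A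
        · by_contra hvb; exact hva ⟨hvA, hvb⟩
        · have hvC : v ∈ C := by
            have := hAC ▸ Set.mem_univ v
            rcases (Set.mem_union ..).1 (hAC ▸ Set.mem_univ v) with h | h
            · exact absurd h hvA
            · exact h
          by_contra hvb
          exact hsep u hua v ⟨hvC, hvb⟩ huv
      simp only [hf, if_pos hua, if_neg hva]
      exact ⟨by simp, Or.inr ⟨hua, v, hvB, huv.symm⟩⟩
    · right
      have huB : u ∈ B := by
        by_cases huA : u ∈ A
        · by_contra hub; exact hua ⟨huA, hub⟩
        · have huC : u ∈ C := by
            rcases (Set.mem_union ..).1 (hAC ▸ Set.mem_univ u) with h | h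
            · exact absurd h huA
            · exact h
          by_contra hub
          exact hsep v hva u ⟨huC, hub⟩ huv.symm
      simp only [hf, if_neg hua, if_pos hva]
      exact ⟨by simp, Or.inl ⟨hva, u, huB, huv⟩⟩
    · left; simp only [hf, if_neg hua, if_neg hva]
  -- X is a connected dominating set on RVerts A B
  have hXsub : X ⊆ RVerts A B := by
    intro x hx
    rcases hx with rfl | ⟨a, ha, rfl⟩
    · exact Set.mem_insert _ _
    · exact Set.mem_insert_of_mem _ ⟨a, ha.2, rfl⟩
  have hXdom : DomOn (RGraph G A B) (RVerts A B) X := by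
    refine ⟨hXsub, ?_⟩
    rintro v (rfl | ⟨a, ha, rfl⟩)
    · exact ⟨none, Set.mem_insert _ _, Or.inl rfl⟩
    · obtain ⟨d, hdD, hd⟩ := hdom.2 a (Set.mem_univ a)
      by_cases hdA : d ∈ A \ B
      · refine ⟨some d, Set.mem_insert_of_mem _ ⟨d, ⟨hdD, hdA⟩, rfl⟩, ?_⟩
        rcases hd with rfl | hd
        · exact Or.inl rfl
        · exact Or.inr ⟨by simpa using hd.ne, Or.inl ⟨hdA, ha, hd⟩⟩
      · refine ⟨none, Set.mem_insert _ _, Or.inr ?_⟩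
        rcases hd with rfl | hd
        · exact absurd ha hdA
        · have hdB : d ∈ B := by
            by_cases hdA' : d ∈ A
            · by_contra hdb; exact hdA ⟨hdA', hdb⟩
            · have hdC : d ∈ C := by
                rcases (Set.mem_union ..).1 (hAC ▸ Set.mem_univ d) with h | h
                · exact absurd h hdA'
                · exact h
              by_contra hdb
              exact hsep a ha d ⟨hdC, hdb⟩ hd.symm
          exact ⟨by simp, Or.inl ⟨ha, d, hdB, hd⟩⟩
  have hXconn : ((RGraph G A B).induce X).Connected := by
    rw [SimpleGraph.connected_iff]
    refine ⟨?_, ⟨⟨none, Set.mem_insert _ _⟩⟩⟩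
    intro x y
    -- write x and y as f of elements of D
    have key : ∀ x : X, ∃ d : D, (x : Option V) = f d := by
      rintro ⟨x, rfl | ⟨a, ha, rfl⟩⟩
      · exact ⟨⟨d0, hd0D⟩, by simp only [hf]; exact (if_neg hd0n).symm⟩
      · exact ⟨⟨a, ha.1⟩, by simp only [hf]; exact (if_pos ha.2).symm⟩
    obtain ⟨dx, hdx⟩ := key x
    obtain ⟨dy, hdy⟩ := key y
    have hx : x = ⟨f dx, hfX dx dx.2⟩ := Subtype.ext hdx
    have hy : y = ⟨f dy, hfX dy dy.2⟩ := Subtype.ext hdy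
    rw [hx, hy]
    exact reach_map_aux f hfX hadj dx dy (hconn.preconnected dx dy)
  -- size bound and conclusion
  have hcard : X.ncard ≤ (D ∩ (A \ B)).ncard + 1 := by
    calc X.ncard ≤ (some '' (D ∩ (A \ B))).ncard + 1 := Set.ncard_insert_le _ _
      _ = (D ∩ (A \ B)).ncard + 1 := by
          rw [Set.ncard_image_of_injective _ (Option.some_injective V)]
  calc optConnDom (RGraph G A B) (RVerts A B) ≤ X.ncard :=
        Nat.sInf_le ⟨X, ⟨hXdom, hXconn⟩, rfl⟩
    _ ≤ _ := hcard

/-- `OPT_CON(G) ≥ OPT_CON(R(G[A],B)) + OPT_CON(R(G[C],B)) − 2` for a separation `(A, B, C)`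
of the connected graph `G` with both sides nonempty. -/
theorem optConnDom_split_lower_bound {V : Type*} [Fintype V]
    (G : SimpleGraph V) (hG : G.Connected)
    (A B C : Set V) (hAC : A ∪ C = Set.univ) (hB : A ∩ C = B)
    (hsep : ∀ a ∈ A \ B, ∀ c ∈ C \ B, ¬ G.Adj a c)
    (hA : (A \ B).Nonempty) (hC : (C \ B).Nonempty) :
    optConnDom (RGraph G A B) (RVerts A B) + optConnDom (RGraph G C B) (RVerts C B)
      ≤ optConnDom G Set.univ + 2 := by
  classical
  -- the set defining optConnDom G univ is nonempty, get a minimum D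
  have huniv : ConnDomOn G Set.univ Set.univ := by
    refine ⟨⟨subset_rfl, fun v _ => ⟨v, Set.mem_univ v, Or.inl rfl⟩⟩, ?_⟩
    exact (SimpleGraph.Iso.connected_iff (SimpleGraph.induceUnivIso G)).2 hG
  have hne : {n | ∃ X : Set V, ConnDomOn G Set.univ X ∧ X.ncard = n}.Nonempty :=
    ⟨Set.univ.ncard, Set.univ, huniv, rfl⟩
  obtain ⟨D, hD, hDcard⟩ := Nat.sInf_mem hne
  have h1 := side_bound G A B C hAC hB hsep hC D hD
  have h2 := side_bound G C B A (by rw [Set.union_comm]; exact hAC)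
      (by rw [Set.inter_comm]; exact hB)
      (fun c hc a ha h => hsep a ha c hc h.symm) hA D hD
  have hdisj : Disjoint (D ∩ (A \ B)) (D ∩ (C \ B)) := by
    rw [Set.disjoint_left]
    rintro x ⟨_, hxA, hxB⟩ ⟨_, hxC, _⟩
    exact hxB (hB ▸ ⟨hxA, hxC⟩)
  have hsum : (D ∩ (A \ B)).ncard + (D ∩ (C \ B)).ncard ≤ D.ncard := by
    rw [← Set.ncard_union_eq hdisj (Set.toFinite _) (Set.toFinite _)]
    exact Set.ncard_le_ncard (by
      rintro x (⟨hx, _⟩ | ⟨hx, _⟩) <;> exact hx) (Set.toFinite D)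
  have : optConnDom G Set.univ = D.ncard := hDcard.symm
  omega
end

section
/- Let G be a connected graph and Z ⊆ V(G) a dominating set of G. If G[Z] has more than one connected component, then there exists a set W of at most 2 vertices such that G[Z ∪ W] has strictly fewer connected components than G[Z] and Z ∪ W is still a dominating set. Consequently, any dominating set Z whose induced subgraph has k connected components can be extended to a connected dominating set of size at most |Z| + 2(k−1). -/
open SimpleGraph

/-- `X` is a dominating set of `G`. -/
def IsDomSet {V : Type*} (G : SimpleGraph V) (X : Set V) : Prop :=
  ∀ v : V, ∃ x ∈ X, x = v ∨ G.Adj x v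

/-- A walk in `G` whose support lies in `s` gives reachability in `G.induce s`. -/
lemma reach_of_walk {V : Type*} (G : SimpleGraph V) {s : Set V} {a b : V}
    (p : G.Walk a b) (h : ∀ v ∈ p.support, v ∈ s) :
    ∀ (ha : a ∈ s) (hb : b ∈ s), (G.induce s).Reachable ⟨a, ha⟩ ⟨b, hb⟩ := by
  induction p with
  | nil => intro ha hb; rfl
  | @cons u w b hadj q ih =>
    intro ha hb
    have hw : w ∈ s := h w (by simp)
    have hadj' : (G.induce s).Adj ⟨u, ha⟩ ⟨w, hw⟩ := by
      simp only [comap_adj, Function.Embedding.coe_subtype]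
      exact hadj
    exact hadj'.reachable.trans (ih (fun v hv => h v (by simp [hv])) hw hb)

lemma merge_lemma {V : Type*} [Fintype V] (G : SimpleGraph V) (hG : G.Connected)
    (Z : Set V) (hZ : IsDomSet G Z)
    (hk : 1 < Nat.card (G.induce Z).ConnectedComponent) :
    ∃ W : Set V, W.ncard ≤ 2 ∧ IsDomSet G (Z ∪ W) ∧
      Nat.card (G.induce (Z ∪ W)).ConnectedComponent <
        Nat.card (G.induce Z).ConnectedComponent := by
  classical
  set cmk : ∀ a : V, a ∈ Z → (G.induce Z).ConnectedComponent :=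
    fun a ha => (G.induce Z).connectedComponentMk ⟨a, ha⟩ with hcmk
  -- the set of distances between vertices of Z in different components
  set S : Set ℕ := {n | ∃ (a : V) (ha : a ∈ Z) (b : V) (hb : b ∈ Z),
    cmk a ha ≠ cmk b hb ∧ G.dist a b = n} with hS
  have hSne : S.Nonempty := by
    have : Nontrivial (G.induce Z).ConnectedComponent :=
      Finite.one_lt_card_iff_nontrivial.mp hk
    obtain ⟨c1, c2, hc⟩ := this
    obtain ⟨⟨a, ha⟩, rfl⟩ := c1.exists_rep
    obtain ⟨⟨b, hb⟩, rfl⟩ := c2.exists_rep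
    exact ⟨G.dist a b, a, ha, b, hb, hc, rfl⟩
  obtain ⟨a, ha, b, hb, hab, hd⟩ := Nat.sInf_mem hSne
  set m := sInf S with hm
  -- minimality: m ≤ 3
  have hm3 : m ≤ 3 := by
    by_contra hcon
    push_neg at hcon
    obtain ⟨p, hp⟩ := hG.exists_walk_length_eq_dist a b
    rw [hd] at hp
    -- p has length m ≥ 4, so it starts with two edges
    cases p with
    | nil => simp at hp; omega
    | cons h1 p1 =>
      cases p1 with
      | nil => simp at hp; omega
      | @cons v1 v2 _ h2 q =>
        simp only [Walk.length_cons] at hp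
        -- v2 is dominated by some u ∈ Z
        obtain ⟨u, hu, huv⟩ := hZ v2
        by_cases hcu : cmk u hu = cmk a ha
        · -- then u gives a shorter pair (u, b)
          have hub : cmk u hu ≠ cmk b hb := hcu ▸ hab
          have hq : G.dist u b < m := by
            rcases huv with rfl | huv
            · calc G.dist u b ≤ q.length := G.dist_le q
                _ < m := by omega
            · calc G.dist u b ≤ (Walk.cons huv q).length := G.dist_le _
                _ < m := by simp; omega
          exact absurd (Nat.sInf_le (show G.dist u b ∈ S from ⟨u, hu, b, hb, hub, rfl⟩)) (by omega)
        · -- then (a, u) is a pair at distance ≤ 3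
          have hq : G.dist a u < m := by
            rcases huv with rfl | huv
            · calc G.dist a u ≤ (Walk.cons h1 (Walk.cons h2 Walk.nil)).length :=
                G.dist_le _
                _ < m := by simp; omega
            · calc G.dist a u
                  ≤ (Walk.cons h1 (Walk.cons h2 (Walk.cons huv.symm Walk.nil))).length :=
                G.dist_le _
                _ < m := by simp; omega
          exact absurd (Nat.sInf_le (show G.dist a u ∈ S from ⟨a, ha, u, hu, fun h => hcu h.symm, rfl⟩)) (by omega)
  -- a geodesic from a to b
  obtain ⟨p, hp⟩ := hG.exists_walk_length_eq_dist a b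
  rw [hd] at hp
  have hane : a ≠ b := by
    rintro rfl
    exact hab (by simp [hcmk])
  set W : Set V := ↑(p.support.toFinset \ {a, b}) with hW
  refine ⟨W, ?_, ?_, ?_⟩
  · -- cardinality bound
    rw [hW, Set.ncard_coe_finset]
    have hsub : ({a, b} : Finset V) ⊆ p.support.toFinset := by
      intro x hx
      simp only [Finset.mem_insert, Finset.mem_singleton] at hx
      rcases hx with rfl | rfl
      · simp [Walk.start_mem_support]
      · simp [Walk.end_mem_support]
    rw [Finset.card_sdiff_of_subset hsub]
    have h1 : p.support.toFinset.card ≤ p.support.length := List.toFinset_card_le _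
    have h2 : p.support.length = p.length + 1 := Walk.length_support p
    have h3 : ({a, b} : Finset V).card = 2 := by
      rw [Finset.card_insert_of_notMem (by simpa using hane), Finset.card_singleton]
    omega
  · -- still dominating
    intro v
    obtain ⟨x, hx, hxv⟩ := hZ v
    exact ⟨x, Or.inl hx, hxv⟩
  · -- strictly fewer components
    have hsupp : ∀ v ∈ p.support, v ∈ Z ∪ W := by
      intro v hv
      by_cases hvab : v = a ∨ v = b
      · rcases hvab with rfl | rfl
        · exact Or.inl ha
        · exact Or.inl hb
      · push_neg at hvab
        refine Or.inr ?_
        simp only [hW, Finset.coe_sdiff, Set.mem_diff, Finset.coe_insert,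
          Finset.coe_singleton, Set.mem_insert_iff, Set.mem_singleton_iff]
        constructor
        · simp [hv]
        · simp [hvab.1, hvab.2]
    have hZsub : Z ⊆ Z ∪ W := Set.subset_union_left
    set f : (G.induce Z).ConnectedComponent → (G.induce (Z ∪ W)).ConnectedComponent :=
      SimpleGraph.ConnectedComponent.map (G.induceHomOfLE hZsub).toHom with hf
    have hfmk : ∀ (x : V) (hx : x ∈ Z),
        f ((G.induce Z).connectedComponentMk ⟨x, hx⟩) =
          (G.induce (Z ∪ W)).connectedComponentMk ⟨x, hZsub hx⟩ := by
      intro x hx; rfl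
    have hsurj : Function.Surjective f := by
      intro c
      obtain ⟨⟨x, hx⟩, rfl⟩ := c.exists_rep
      rcases hx with hxZ | hxW
      · exact ⟨(G.induce Z).connectedComponentMk ⟨x, hxZ⟩, hfmk x hxZ⟩
      · -- x lies on the path p, hence is reachable from a within Z ∪ W
        have hxs : x ∈ p.support := by
          have := hxW
          simp only [hW, Finset.coe_sdiff, Set.mem_diff, Finset.mem_coe,
            List.mem_toFinset] at this
          exact this.1
        have hq := reach_of_walk G (p.takeUntil x hxs)
          (fun v hv => hsupp v (p.support_takeUntil_subset hxs hv)) (Or.inl ha)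
          (Or.inr hxW)
        refine ⟨(G.induce Z).connectedComponentMk ⟨a, ha⟩, ?_⟩
        rw [hfmk a ha]
        exact SimpleGraph.ConnectedComponent.sound hq
    have hninj : ¬ Function.Injective f := by
      intro hinj
      apply hab
      apply hinj
      rw [hcmk]
      rw [hfmk a ha, hfmk b hb]
      exact SimpleGraph.ConnectedComponent.sound
        (reach_of_walk G p hsupp (Or.inl ha) (Or.inl hb))
    have hle : Nat.card (G.induce (Z ∪ W)).ConnectedComponent ≤
        Nat.card (G.induce Z).ConnectedComponent :=
      Nat.card_le_card_of_surjective f hsurj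
    rcases lt_or_eq_of_le hle with h | h
    · exact h
    · exfalso
      apply hninj
      exact ((Nat.bijective_iff_surjective_and_card f).mpr ⟨hsurj, h.symm⟩).injective

lemma extend_lemma {V : Type*} [Fintype V] (G : SimpleGraph V) (hG : G.Connected) :
    ∀ k : ℕ, ∀ Z : Set V, IsDomSet G Z → Nat.card (G.induce Z).ConnectedComponent = k →
      ∃ Z' : Set V, Z ⊆ Z' ∧ IsDomSet G Z' ∧ (G.induce Z').Connected ∧
        Z'.ncard ≤ Z.ncard + 2 * (k - 1) := by
  intro k
  induction k using Nat.strong_induction_on with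
  | _ k ih =>
    intro Z hZ hk
    by_cases h1 : 1 < Nat.card (G.induce Z).ConnectedComponent
    · obtain ⟨W, hW2, hWdom, hWlt⟩ := merge_lemma G hG Z hZ h1
      obtain ⟨Z', hsub, hdom, hconn, hcard⟩ :=
        ih (Nat.card (G.induce (Z ∪ W)).ConnectedComponent) (by omega) (Z ∪ W) hWdom rfl
      refine ⟨Z', Set.Subset.trans Set.subset_union_left hsub, hdom, hconn, ?_⟩
      have hun : (Z ∪ W).ncard ≤ Z.ncard + W.ncard := Set.ncard_union_le Z W
      omega
    · -- at most one component; in fact exactly one, so Z already induces a connected graph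
      have hv : Nonempty V := hG.nonempty
      obtain ⟨v⟩ := hv
      obtain ⟨x, hx, _⟩ := hZ v
      have hpos : 0 < Nat.card (G.induce Z).ConnectedComponent := by
        have : Nonempty (G.induce Z).ConnectedComponent :=
          ⟨(G.induce Z).connectedComponentMk ⟨x, hx⟩⟩
        exact Nat.card_pos
      have hone : Nat.card (G.induce Z).ConnectedComponent = 1 := by omega
      obtain ⟨hss, -⟩ := Nat.card_eq_one_iff_unique.mp hone
      haveI : Nonempty ↥Z := ⟨⟨x, hx⟩⟩
      refine ⟨Z, subset_refl Z, hZ, ⟨fun u w => ?_⟩, by omega⟩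
      exact SimpleGraph.ConnectedComponent.exact
        (Subsingleton.elim ((G.induce Z).connectedComponentMk u)
          ((G.induce Z).connectedComponentMk w))

/-- In a connected graph, a dominating set inducing more than one connected component can be
augmented by at most 2 vertices so as to strictly decrease the number of components, while
remaining dominating; consequently, a dominating set inducing `k` components extends to a
connected dominating set of size at most `|Z| + 2(k − 1)`. -/
theorem dom_merge_components {V : Type*} [Fintype V]
    (G : SimpleGraph V) (hG : G.Connected)
    (Z : Set V) (hZ : IsDomSet G Z) :
    (1 < Nat.card (G.induce Z).ConnectedComponent →
      ∃ W : Set V, W.ncard ≤ 2 ∧ IsDomSet G (Z ∪ W) ∧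
        Nat.card (G.induce (Z ∪ W)).ConnectedComponent <
          Nat.card (G.induce Z).ConnectedComponent) ∧
    (∀ k : ℕ, Nat.card (G.induce Z).ConnectedComponent = k →
      ∃ Z' : Set V, Z ⊆ Z' ∧ IsDomSet G Z' ∧ (G.induce Z').Connected ∧
        Z'.ncard ≤ Z.ncard + 2 * (k - 1)) := by
  exact ⟨merge_lemma G hG Z hZ, fun k hk => extend_lemma G hG k Z hZ hk⟩
end

section
/- Let G be a graph with a tree decomposition 𝒯 rooted at r with root bag empty, let n = |V(G)|, and let s ≤ n. Then there exists a node t of 𝒯 such that s ≤ |V_t| ≤ 2s, where V_t is the set of vertices appearing in bags of the subtree rooted at t, provided every node of 𝒯 has at most 2 children and leaf bags are empty and each node's bag differs from its child's bag by at most one vertex (nice tree decomposition). -/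
/-- In the tree `T` rooted at `r`, `t'` is a descendant of `t` (possibly `t' = t`) iff `t`
lies on every walk from `t'` to the root `r`. -/
def Desc {W : Type*} (T : SimpleGraph W) (r t t' : W) : Prop :=
  ∀ p : T.Walk t' r, t ∈ p.support

/-- `V_t`: the set of vertices appearing in the bags of the subtree rooted at `t`
(i.e. in bags of descendants of `t`, including `t` itself). -/
def Vt {V W : Type*} (T : SimpleGraph W) (r : W) (bag : W → Set V) (t : W) : Set V :=
  {v | ∃ t', Desc T r t t' ∧ v ∈ bag t'}

/-- `t'` is a child of `t` in the tree `T` rooted at `r`. -/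
def IsChild {W : Type*} (T : SimpleGraph W) (r t t' : W) : Prop :=
  T.Adj t t' ∧ Desc T r t t'

/-!
Among the nodes `t` with `|V_t| ≥ s` (the root is one, since `V_r = V`) pick one with the fewest
descendants. Each child `c` of `t` then has `|V_c| ≤ s - 1`. Since `V_t` is covered by
`bag t \ bag c₀` for any child `c₀` together with the sets `V_c` of the (at most two) children,
`|V_t| ≤ 1 + 2 (s - 1) ≤ 2 s`; if `t` has no child, `V_t = bag t = ∅`.
-/

open SimpleGraph

lemma Set.ncard_biUnion_le_ncard_mul {ι α : Type*} {t : Set ι} (ht : t.Finite) (s : ι → Set α)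
    {n : ℕ} (h : ∀ i ∈ t, (s i).ncard ≤ n) : (⋃ i ∈ t, s i).ncard ≤ t.ncard * n := by
  lift t to Finset ι using ht
  calc (⋃ i ∈ (t : Set ι), s i).ncard ≤ ∑ i ∈ t, (s i).ncard := by
        simpa using t.set_ncard_biUnion_le s
    _ ≤ t.card * n := by simpa using t.sum_le_card_nsmul _ n h
    _ = (t : Set ι).ncard * n := by rw [Set.ncard_coe_finset]

section RootedTree

variable {W : Type*} {T : SimpleGraph W} {r t u x : W}

lemma desc_refl (t : W) : Desc T r t t := fun p => p.start_mem_support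

lemma desc_root (t : W) : Desc T r r t := fun p => p.end_mem_support

lemma Desc.trans (htu : Desc T r t u) (hux : Desc T r u x) : Desc T r t x := by
  classical
  intro p
  exact p.support_dropUntil_subset_support (hux p) (htu _)

lemma Desc.antisymm (hr : T.Reachable t r) (htu : Desc T r t u) (hut : Desc T r u t) : t = u := by
  classical
  by_contra hne
  obtain ⟨p, hp⟩ := hr.exists_walk_length_eq_dist
  have hu : u ∈ p.support := hut p
  let q := p.dropUntil u hu
  have ht : t ∈ q.support := htu q
  have : (q.dropUntil t ht).length < p.length :=
    (q.length_dropUntil_le_length ht).trans_lt (p.length_dropUntil_lt_length hu (Ne.symm hne))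
  exact this.not_ge (hp ▸ dist_le _)

lemma desc_of_mem_support_isPath (hac : T.IsAcyclic) {p : T.Walk x r} (hp : p.IsPath)
    (ht : t ∈ p.support) : Desc T r t x := by
  classical
  intro w
  have : (⟨p, hp⟩ : T.Path x r) = w.toPath := (hac.subsingleton_path x r).elim _ _
  exact w.support_toPath_subset_support (this ▸ ht)

lemma Desc.exists_isChild (hconn : T.Connected) (hac : T.IsAcyclic) (htx : Desc T r t x)
    (hne : x ≠ t) : ∃ c, IsChild T r t c ∧ Desc T r c x := by
  classical
  let p := (hconn x r).some.toPath
  have htp : t ∈ p.1.support := htx p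
  let q := p.1.takeUntil t htp
  have hq : q.IsPath := p.2.takeUntil htp
  have hqnil : ¬ q.Nil := fun h => hne h.eq
  -- the child is the vertex just below `t` on the path from `x` up to the root
  refine ⟨q.penultimate, ⟨(q.adj_penultimate hqnil).symm, fun w => ?_⟩, ?_⟩
  · have htq : t ∉ q.dropLast.support := by
      have := hq.support_nodup
      rw [← Walk.support_dropLast_concat hqnil, List.nodup_append] at this
      exact fun h => this.2.2 t h t (List.mem_singleton_self t) rfl
    have := htx (q.dropLast.append w)
    rw [Walk.mem_support_append_iff] at this
    exact this.resolve_left htq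
  · exact desc_of_mem_support_isPath hac p.2
      (p.1.support_takeUntil_subset_support htp (q.getVert_mem_support _))

lemma ncard_descendants_lt_of_isChild [Finite W] (hr : T.Reachable t r) {c : W}
    (hc : IsChild T r t c) : {x | Desc T r c x}.ncard < {x | Desc T r t x}.ncard := by
  refine Set.ncard_lt_ncard ⟨fun x hx => hc.2.trans hx, fun hsub => ?_⟩
  exact hc.1.ne (Desc.antisymm hr hc.2 (hsub (desc_refl t)))

end RootedTree

section Bags

variable {V W : Type*} {T : SimpleGraph W} {r t : W} {bag : W → Set V}

lemma bag_subset_Vt (t : W) : bag t ⊆ Vt T r bag t := fun _ hv => ⟨t, desc_refl t, hv⟩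

lemma Vt_root_eq_univ (hcover : ∀ v, ∃ t, v ∈ bag t) : Vt T r bag r = Set.univ :=
  Set.eq_univ_of_forall fun v => (hcover v).imp fun t hv => ⟨desc_root t, hv⟩

lemma Vt_subset_bag_union_biUnion (hconn : T.Connected) (hac : T.IsAcyclic) (t : W) :
    Vt T r bag t ⊆ bag t ∪ ⋃ c ∈ {c | IsChild T r t c}, Vt T r bag c := by
  rintro v ⟨x, htx, hv⟩
  by_cases hxt : x = t
  · exact Or.inl (hxt ▸ hv)
  · obtain ⟨c, hc, hcx⟩ := htx.exists_isChild hconn hac hxt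
    exact Or.inr (Set.mem_biUnion hc ⟨x, hcx, hv⟩)

lemma ncard_Vt_le_two_mul [Finite V] [Finite W] (hconn : T.Connected) (hac : T.IsAcyclic)
    {s : ℕ} (hchildren : {c | IsChild T r t c}.ncard ≤ 2)
    (hleaf : {c | IsChild T r t c} = ∅ → bag t = ∅)
    (hnice : ∀ c, IsChild T r t c → ((bag t \ bag c) ∪ (bag c \ bag t)).ncard ≤ 1)
    (hsmall : ∀ c, IsChild T r t c → (Vt T r bag c).ncard < s) :
    (Vt T r bag t).ncard ≤ 2 * s := by
  set C := {c | IsChild T r t c}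
  have hVt : Vt T r bag t ⊆ bag t ∪ ⋃ c ∈ C, Vt T r bag c :=
    Vt_subset_bag_union_biUnion hconn hac t
  rcases C.eq_empty_or_nonempty with hC | ⟨c₀, hc₀⟩
  · rw [hleaf hC, hC, Set.biUnion_empty, Set.union_empty, Set.subset_empty_iff] at hVt
    simp [hVt]
  have hbag : bag t ⊆ (bag t \ bag c₀) ∪ Vt T r bag c₀ := fun v hv => by
    by_cases h : v ∈ bag c₀
    · exact Or.inr (bag_subset_Vt c₀ h)
    · exact Or.inl ⟨hv, h⟩
  have hdiff : (bag t \ bag c₀).ncard ≤ 1 :=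
    (Set.ncard_le_ncard Set.subset_union_left).trans (hnice c₀ hc₀)
  have hunion : (⋃ c ∈ C, Vt T r bag c).ncard ≤ 2 * (s - 1) :=
    (Set.ncard_biUnion_le_ncard_mul (Set.toFinite C) _
      fun c hc => Nat.le_sub_one_of_lt (hsmall c hc)).trans (Nat.mul_le_mul_right _ hchildren)
  have hs := hsmall c₀ hc₀
  calc (Vt T r bag t).ncard ≤ ((bag t \ bag c₀) ∪ ⋃ c ∈ C, Vt T r bag c).ncard := by
        refine Set.ncard_le_ncard (hVt.trans (Set.union_subset ?_ Set.subset_union_right))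
        exact hbag.trans (Set.union_subset_union_right _ (Set.subset_biUnion_of_mem hc₀))
    _ ≤ (bag t \ bag c₀).ncard + (⋃ c ∈ C, Vt T r bag c).ncard := Set.ncard_union_le _ _
    _ ≤ 2 * s := by omega

end Bags

theorem exists_node_with_medium_subtree_general {V W : Type*} [Fintype V] [Fintype W]
    (T : SimpleGraph W) (r : W) (bag : W → Set V)
    (htree : T.Connected ∧ T.IsAcyclic)
    (hcover : ∀ v : V, ∃ t, v ∈ bag t)
    (hchildren : ∀ t : W, {t' | IsChild T r t t'}.ncard ≤ 2)
    (hleaf : ∀ t : W, {t' | IsChild T r t t'} = ∅ → bag t = ∅)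
    (hnice : ∀ t t' : W, IsChild T r t t' →
      ((bag t \ bag t') ∪ (bag t' \ bag t)).ncard ≤ 1)
    (s : ℕ) (hs : s ≤ Fintype.card V) :
    ∃ t : W, s ≤ (Vt T r bag t).ncard ∧ (Vt T r bag t).ncard ≤ 2 * s := by
  obtain ⟨hconn, hac⟩ := htree
  have hs_root : s ≤ (Vt T r bag r).ncard := by
    rwa [Vt_root_eq_univ hcover, Set.ncard_univ, Nat.card_eq_fintype_card]
  obtain ⟨t, hst, hmin⟩ := Set.exists_min_image {t | s ≤ (Vt T r bag t).ncard}
    (fun t => {x | Desc T r t x}.ncard) (Set.toFinite _) ⟨r, hs_root⟩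
  refine ⟨t, hst, ncard_Vt_le_two_mul hconn hac (hchildren t) (hleaf t) (hnice t) fun c hc => ?_⟩
  by_contra! hsc
  exact (hmin c hsc).not_gt (ncard_descendants_lt_of_isChild (hconn t r) hc)

/-- In a nice tree decomposition (root bag empty, each node with at most 2 children, leaf
bags empty, adjacent bags differing in at most one vertex) of a graph with `n` vertices,
for every `s ≤ n` there is a node `t` with `s ≤ |V_t| ≤ 2s`. -/
theorem exists_node_with_medium_subtree {V W : Type*} [Fintype V] [Fintype W]
    (G : SimpleGraph V) (T : SimpleGraph W) (r : W) (bag : W → Set V)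
    (htree : T.Connected ∧ T.IsAcyclic)
    (hcover : ∀ v : V, ∃ t, v ∈ bag t)
    (hedge : ∀ u v : V, G.Adj u v → ∃ t, u ∈ bag t ∧ v ∈ bag t)
    (hbagconn : ∀ v : V, (T.induce {t | v ∈ bag t}).Connected)
    (hroot : bag r = ∅)
    (hchildren : ∀ t : W, {t' | IsChild T r t t'}.ncard ≤ 2)
    (hleaf : ∀ t : W, {t' | IsChild T r t t'} = ∅ → bag t = ∅)
    (hnice : ∀ t t' : W, IsChild T r t t' →
      ((bag t \ bag t') ∪ (bag t' \ bag t)).ncard ≤ 1)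
    (s : ℕ) (hs : s ≤ Fintype.card V) :
    ∃ t : W, s ≤ (Vt T r bag t).ncard ∧ (Vt T r bag t).ncard ≤ 2 * s :=
  exists_node_with_medium_subtree_general T r bag htree hcover hchildren hleaf hnice s hs
end
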